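/- Let f_1, f_2 : S → ℝ be continuous and φ(λ) = ⟨f_1, λ⟩⟨f_2, λ⟩. Then for every ξ ∈ S^E, L_VM(φ ∘ m)(ξ) = Σ_{x,y∈E} π(x)² q(x,y) [f_1(ξ(y)) − f_1(ξ(x))][f_2(ξ(y)) − f_2(ξ(x))]. -/
import Mathlib


open MeasureTheory Finset

/-- Empirical measure `m(ξ) = ∑_{x∈E} π(x) δ_{ξ(x)}`. -/
noncomputable def empMeas {E S : Type*} [Fintype E] [MeasurableSpace S]
    (π : E → ℝ) (ξ : E → S) : Measure S :=
  ∑ x : E, (ENNReal.ofReal (π x)) • Measure.dirac (ξ x)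

/-- Voting generator `L_VM F(ξ) = ∑_{x,y} q(x,y)[F(ξ^{x,y}) − F(ξ)]`. -/
noncomputable def LVM {E S : Type*} [Fintype E] [DecidableEq E]
    (q : E → E → ℝ) (F : (E → S) → ℝ) (ξ : E → S) : ℝ :=
  ∑ x : E, ∑ y : E, q x y * (F (Function.update ξ x (ξ y)) - F ξ)

lemma integral_empMeas {E S : Type*} [Fintype E] [MetricSpace S] [MeasurableSpace S]
    [BorelSpace S] (π : E → ℝ) (hπ : ∀ x, 0 ≤ π x) (ξ : E → S) (f : C(S, ℝ)) :
    ∫ σ, f σ ∂(empMeas π ξ) = ∑ x, π x * f (ξ x) := by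
  have hint : ∀ (a : S) (c : ℝ),
      Integrable (⇑f) ((ENNReal.ofReal c) • Measure.dirac a) := by
    intro a c
    refine Integrable.smul_measure ?_ ENNReal.ofReal_ne_top
    refine ⟨f.continuous.measurable.aestronglyMeasurable, ?_⟩
    rw [HasFiniteIntegral, lintegral_dirac]
    exact ENNReal.coe_lt_top
  rw [empMeas, integral_finset_sum_measure (fun x _ => hint (ξ x) (π x))]
  refine Finset.sum_congr rfl fun x _ => ?_
  rw [integral_smul_measure, integral_dirac, ENNReal.toReal_ofReal (hπ x), smul_eq_mul]

/-- Corollary 2.2 (2), voting part (eq. 2.15): for `φ(λ) = ⟨f₁,λ⟩⟨f₂,λ⟩`,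
`L_VM(φ∘m)(ξ) = ∑_{x,y} π(x)² q(x,y) [f₁(ξ(y)) − f₁(ξ(x))][f₂(ξ(y)) − f₂(ξ(x))]`. -/
theorem voter_generator_on_second_moment
    {E S : Type*} [Fintype E] [DecidableEq E]
    [MetricSpace S] [CompactSpace S] [MeasurableSpace S] [BorelSpace S]
    (hE : 2 ≤ Fintype.card E)
    (q : E → E → ℝ) (π : E → ℝ)
    (hq0 : ∀ x y, 0 ≤ q x y) (hq1 : ∀ x, ∑ y, q x y = 1)
    (hqdiag : ∀ x, q x x = 0)
    (hirr : ∀ x y : E, ∃ n : ℕ, 0 < ((Matrix.of q) ^ n) x y)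
    (hπpos : ∀ x, 0 < π x) (hπ1 : ∑ x, π x = 1)
    (hπstat : ∀ y, ∑ x, π x * q x y = π y)
    (f₁ f₂ : C(S, ℝ)) (ξ : E → S) :
    LVM q (fun ζ => (∫ σ, f₁ σ ∂(empMeas π ζ)) * (∫ σ, f₂ σ ∂(empMeas π ζ))) ξ =
      ∑ x : E, ∑ y : E, π x ^ 2 * q x y *
        ((f₁ (ξ y) - f₁ (ξ x)) * (f₂ (ξ y) - f₂ (ξ x))) := by
  have hπ0 : ∀ x, 0 ≤ π x := fun x => (hπpos x).le
  have hI : ∀ (f : C(S, ℝ)) (ζ : E → S),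
      ∫ σ, f σ ∂(empMeas π ζ) = ∑ z, π z * f (ζ z) :=
    fun f ζ => integral_empMeas π hπ0 ζ f
  have hupd : ∀ (f : C(S, ℝ)) (x y : E),
      ∑ z, π z * f (Function.update ξ x (ξ y) z) =
        (∑ z, π z * f (ξ z)) + π x * (f (ξ y) - f (ξ x)) := by
    intro f x y
    have h : ∀ z : E, π z * f (Function.update ξ x (ξ y) z) =
        π z * f (ξ z) + (if z = x then π x * (f (ξ y) - f (ξ x)) else 0) := by
      intro z
      by_cases h : z = x
      · subst h; simp [Function.update_self]; ring
      · simp [Function.update_of_ne h, h]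
    simp_rw [h]
    rw [Finset.sum_add_distrib, Finset.sum_ite_eq' Finset.univ x]
    simp
  -- the cross terms vanish
  have hz : ∀ (f : C(S, ℝ)),
      ∑ x : E, ∑ y : E, q x y * (π x * (f (ξ y) - f (ξ x))) = 0 := by
    intro f
    have h1 : ∑ x : E, ∑ y : E, π x * q x y * f (ξ y) = ∑ y, π y * f (ξ y) := by
      rw [Finset.sum_comm]
      refine Finset.sum_congr rfl fun y _ => ?_
      rw [← Finset.sum_mul, hπstat]
    have h2 : ∑ x : E, ∑ y : E, π x * q x y * f (ξ x) = ∑ x, π x * f (ξ x) := by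
      refine Finset.sum_congr rfl fun x _ => ?_
      have : ∑ y, π x * q x y * f (ξ x) = (π x * f (ξ x)) * ∑ y, q x y := by
        rw [Finset.mul_sum]
        exact Finset.sum_congr rfl fun y _ => by ring
      rw [this, hq1 x, mul_one]
    calc ∑ x : E, ∑ y : E, q x y * (π x * (f (ξ y) - f (ξ x)))
        = ∑ x : E, ∑ y : E,
            (π x * q x y * f (ξ y) - π x * q x y * f (ξ x)) := by
          refine Finset.sum_congr rfl fun x _ => Finset.sum_congr rfl fun y _ => by ring
      _ = (∑ x : E, ∑ y : E, π x * q x y * f (ξ y)) -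
            ∑ x : E, ∑ y : E, π x * q x y * f (ξ x) := by
          rw [← Finset.sum_sub_distrib]
          exact Finset.sum_congr rfl fun x _ => by rw [Finset.sum_sub_distrib]
      _ = 0 := by rw [h1, h2]; exact sub_self _
  set A := ∑ z, π z * f₁ (ξ z) with hA
  set B := ∑ z, π z * f₂ (ξ z) with hB
  have key : ∀ x y : E,
      q x y * ((∫ σ, f₁ σ ∂(empMeas π (Function.update ξ x (ξ y)))) *
          (∫ σ, f₂ σ ∂(empMeas π (Function.update ξ x (ξ y)))) -
        (∫ σ, f₁ σ ∂(empMeas π ξ)) * (∫ σ, f₂ σ ∂(empMeas π ξ))) =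
      π x ^ 2 * q x y * ((f₁ (ξ y) - f₁ (ξ x)) * (f₂ (ξ y) - f₂ (ξ x))) +
        (B * (q x y * (π x * (f₁ (ξ y) - f₁ (ξ x)))) +
         A * (q x y * (π x * (f₂ (ξ y) - f₂ (ξ x))))) := by
    intro x y
    rw [hI f₁, hI f₂, hI f₁, hI f₂, hupd f₁, hupd f₂, ← hA, ← hB]
    ring
  rw [LVM]
  calc ∑ x : E, ∑ y : E, q x y *
        ((∫ σ, f₁ σ ∂(empMeas π (Function.update ξ x (ξ y)))) *
          (∫ σ, f₂ σ ∂(empMeas π (Function.update ξ x (ξ y)))) -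
        (∫ σ, f₁ σ ∂(empMeas π ξ)) * (∫ σ, f₂ σ ∂(empMeas π ξ)))
      = ∑ x : E, ∑ y : E,
          (π x ^ 2 * q x y * ((f₁ (ξ y) - f₁ (ξ x)) * (f₂ (ξ y) - f₂ (ξ x))) +
            (B * (q x y * (π x * (f₁ (ξ y) - f₁ (ξ x)))) +
             A * (q x y * (π x * (f₂ (ξ y) - f₂ (ξ x)))))) := by
        exact Finset.sum_congr rfl fun x _ => Finset.sum_congr rfl fun y _ => key x y
    _ = (∑ x : E, ∑ y : E,
          π x ^ 2 * q x y * ((f₁ (ξ y) - f₁ (ξ x)) * (f₂ (ξ y) - f₂ (ξ x)))) +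
        (B * (∑ x : E, ∑ y : E, q x y * (π x * (f₁ (ξ y) - f₁ (ξ x)))) +
         A * (∑ x : E, ∑ y : E, q x y * (π x * (f₂ (ξ y) - f₂ (ξ x))))) := by
        simp only [Finset.sum_add_distrib, Finset.mul_sum]
    _ = ∑ x : E, ∑ y : E, π x ^ 2 * q x y *
          ((f₁ (ξ y) - f₁ (ξ x)) * (f₂ (ξ y) - f₂ (ξ x))) := by
        rw [hz f₁, hz f₂]; ring
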